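/- arXiv:2209.05156 — 4 statements merged into one kernel-verified Lean document; each statement's English description precedes it below -/
import Mathlib

section
/- If α is a locally Lipschitz class K function and h:[0,t_f)→ℝ is a continuously differentiable function satisfying ḣ(t) ≥ -α(h(t)) for all t ∈ [0,t_f) with h(0) ≥ 0, then h(t) ≥ 0 for all t ∈ [0,t_f). -/
open Set Filter Topology NNReal

/-!
On `[0, t]` the values of `h` stay in a compact set, on which `α` is `K`-Lipschitz; as
`α 0 = 0` this gives `-ḣ ≤ α h ≤ K |h|`. A one-sided Grönwall inequality then forces `-h ≤ 0`:
`-h` can never cross the positive barrier `gronwallBound 0 K ε`, because where it touches the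
barrier `|h| = -h` and the bound becomes linear.
-/

theorem LocallyLipschitz.exists_norm_le_mul_norm_of_isCompact {E F : Type*}
    [SeminormedAddCommGroup E] [SeminormedAddCommGroup F] {α : E → F}
    (hα : LocallyLipschitz α) (h0 : α 0 = 0) {s : Set E} (hs : IsCompact s) :
    ∃ K : ℝ≥0, ∀ y ∈ s, ‖α y‖ ≤ K * ‖y‖ := by
  obtain ⟨K, hK⟩ := hα.locallyLipschitzOn.exists_lipschitzOnWith_of_compact (hs.insert 0)
  refine ⟨K, fun y hy => ?_⟩
  simpa [h0] using hK.dist_le_mul y (mem_insert_of_mem _ hy) 0 (mem_insert _ _)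

theorem le_zero_of_deriv_right_le_mul_abs {f f' : ℝ → ℝ} {K : ℝ≥0} {a b : ℝ}
    (hf : ContinuousOn f (Icc a b)) (hf' : ∀ x ∈ Ico a b, HasDerivWithinAt f (f' x) (Ici x) x)
    (ha : f a ≤ 0) (bound : ∀ x ∈ Ico a b, f' x ≤ K * |f x|) :
    ∀ x ∈ Icc a b, f x ≤ 0 := by
  have le_barrier : ∀ ε > 0, ∀ x ∈ Icc a b, f x ≤ gronwallBound 0 K ε (x - a) := by
    intro ε hε
    refine image_le_of_deriv_right_lt_deriv_boundary hf hf' (by rwa [sub_self, gronwallBound_x0])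
      (fun x => hasDerivAt_gronwallBound_shift 0 K ε x a) fun x hx hfx => ?_
    have barrier_nonneg : 0 ≤ gronwallBound 0 K ε (x - a) := by
      simpa [gronwallBound_x0] using gronwallBound_mono le_rfl hε.le K.2 (sub_nonneg.2 hx.1)
    calc f' x ≤ K * |f x| := bound x hx
      _ = K * gronwallBound 0 K ε (x - a) := by rw [hfx, abs_of_nonneg barrier_nonneg]
      _ < K * gronwallBound 0 K ε (x - a) + ε := lt_add_of_pos_right _ hε
  intro x hx
  have barrier_tendsto : Tendsto (fun ε => gronwallBound 0 K ε (x - a)) (𝓝[>] 0) (𝓝 0) := by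
    simpa [gronwallBound_ε0_δ0] using
      ((gronwallBound_continuous_ε 0 K (x - a)).tendsto 0).mono_left nhdsWithin_le_nhds
  exact ge_of_tendsto barrier_tendsto
    (eventually_nhdsWithin_of_forall fun ε hε => le_barrier ε hε x hx)

theorem stmt0_general
    (tf : EReal)
    (α : ℝ → ℝ)
    (hα_zero : α 0 = 0)
    (hα_lip : LocallyLipschitz α)
    (h h' : ℝ → ℝ)
    (hderiv : ∀ t : ℝ, 0 ≤ t → (t : EReal) < tf → HasDerivAt h (h' t) t)
    (hineq : ∀ t : ℝ, 0 ≤ t → (t : EReal) < tf → h' t ≥ -α (h t))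
    (h0 : h 0 ≥ 0) :
    ∀ t : ℝ, 0 ≤ t → (t : EReal) < tf → h t ≥ 0 := by
  intro t ht ht_lt
  have lt_tf : ∀ x ∈ Icc 0 t, (x : EReal) < tf := fun x hx =>
    (EReal.coe_le_coe_iff.2 hx.2).trans_lt ht_lt
  have hd : ∀ x ∈ Icc 0 t, HasDerivAt h (h' x) x := fun x hx => hderiv x hx.1 (lt_tf x hx)
  have hcont : ContinuousOn h (Icc 0 t) := fun x hx => (hd x hx).continuousAt.continuousWithinAt
  obtain ⟨K, hK⟩ := hα_lip.exists_norm_le_mul_norm_of_isCompact hα_zero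
    (isCompact_Icc.image_of_continuousOn hcont)
  have bound : ∀ x ∈ Ico 0 t, -h' x ≤ K * |-h x| := fun x hx =>
    calc -h' x ≤ α (h x) := by linarith [hineq x hx.1 (lt_tf x (Ico_subset_Icc_self hx))]
      _ ≤ |α (h x)| := le_abs_self _
      _ ≤ K * |-h x| := by
        rw [abs_neg]; exact hK _ (mem_image_of_mem h (Ico_subset_Icc_self hx))
  have := le_zero_of_deriv_right_le_mul_abs hcont.neg
    (fun x hx => (hd x (Ico_subset_Icc_self hx)).neg.hasDerivWithinAt) (by simpa using h0) bound
    t ⟨ht, le_rfl⟩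
  simpa using this

/-- Comparison lemma: if `α` is a locally Lipschitz class-K function and
`h : [0, t_f) → ℝ` is continuously differentiable with `ḣ(t) ≥ -α(h(t))`
on `[0, t_f)` and `h 0 ≥ 0`, then `h t ≥ 0` on `[0, t_f)`.
Here `t_f : EReal` may be `⊤` (infinite horizon). -/
theorem stmt0
    (tf : EReal) (htf : 0 < tf)
    (α : ℝ → ℝ)
    (hα_cont : Continuous α)
    (hα_mono : StrictMonoOn α (Set.Ici 0))
    (hα_zero : α 0 = 0)
    (hα_lip : LocallyLipschitz α)
    (h h' : ℝ → ℝ)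
    (hderiv : ∀ t : ℝ, 0 ≤ t → (t : EReal) < tf → HasDerivAt h (h' t) t)
    (h'cont : ContinuousOn h' {t : ℝ | 0 ≤ t ∧ (t : EReal) < tf})
    (hineq : ∀ t : ℝ, 0 ≤ t → (t : EReal) < tf → h' t ≥ -α (h t))
    (h0 : h 0 ≥ 0) :
    ∀ t : ℝ, 0 ≤ t → (t : EReal) < tf → h t ≥ 0 :=
  stmt0_general tf α hα_zero hα_lip h h' hderiv hineq h0
end

section
/- Given a continuously differentiable function h:ℝⁿ→ℝ defining C = {x : h(x) ≥ 0}, and a locally Lipschitz class K function α, suppose the locally Lipschitz closed-loop vector field F satisfies ⟨∇h(x), F(x)⟩ ≥ -α(h(x)) for all x in a neighborhood D ⊇ C. Then C is forward invariant for ẋ = F(x). -/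
/-- A set `Ω` is forward invariant for `ẋ = F x`. -/
def ForwardInvariant {n : ℕ} (F : EuclideanSpace ℝ (Fin n) → EuclideanSpace ℝ (Fin n))
    (Ω : Set (EuclideanSpace ℝ (Fin n))) : Prop :=
  ∀ x : ℝ → EuclideanSpace ℝ (Fin n), (∀ t : ℝ, HasDerivAt x (F (x t)) t) →
    x 0 ∈ Ω → ∀ t : ℝ, 0 ≤ t → x t ∈ Ω

open scoped RealInnerProductSpace in
/-- CBF invariance: if `h` is `C¹`, `α` is a locally Lipschitz class-K function,
`F` is locally Lipschitz, and `⟨∇h x, F x⟩ ≥ -α (h x)` on an open neighborhood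
`D ⊇ C = {x | h x ≥ 0}`, then `C` is forward invariant for `ẋ = F x`. -/
theorem stmt3 {n : ℕ}
    (h : EuclideanSpace ℝ (Fin n) → ℝ) (hh : ContDiff ℝ 1 h)
    (α : ℝ → ℝ)
    (hα_cont : Continuous α) (hα_mono : StrictMonoOn α (Set.Ici 0))
    (hα_zero : α 0 = 0) (hα_lip : LocallyLipschitz α)
    (F : EuclideanSpace ℝ (Fin n) → EuclideanSpace ℝ (Fin n))
    (hF : LocallyLipschitz F)
    (D : Set (EuclideanSpace ℝ (Fin n))) (hD_open : IsOpen D)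
    (hCD : {x | h x ≥ 0} ⊆ D)
    (hcbf : ∀ x ∈ D, ⟪gradient h x, F x⟫ ≥ -α (h x)) :
    ForwardInvariant F {x | h x ≥ 0} := by
  intro x hx hx0 t₁ ht₁
  by_contra hbad
  have hy1 : h (x t₁) < 0 := lt_of_not_ge hbad
  have hxc : Continuous x := continuous_iff_continuousAt.mpr fun t => (hx t).continuousAt
  have hyc : Continuous (fun t => h (x t)) := hh.continuous.comp hxc
  -- derivative of t ↦ h (x t)
  have hy' : ∀ t, HasDerivAt (fun s => h (x s)) (⟪gradient h (x t), F (x t)⟫) t := by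
    intro t
    have h1 : HasFDerivAt h
        ((InnerProductSpace.toDual ℝ (EuclideanSpace ℝ (Fin n))) (gradient h (x t))) (x t) :=
      hasGradientAt_iff_hasFDerivAt.mp ((hh.differentiable one_ne_zero (x t)).hasGradientAt)
    have h2 := h1.comp_hasDerivAt t (hx t)
    rw [InnerProductSpace.toDual_apply_apply] at h2
    exact h2
  -- Lipschitz bound for α near 0
  obtain ⟨K, s, hs, hK⟩ := hα_lip 0
  obtain ⟨ε, hε, hball⟩ := Metric.mem_nhds_iff.mp hs
  have h0s : (0:ℝ) ∈ s := hball (Metric.mem_ball_self hε)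
  have hαb : ∀ u : ℝ, |u| < ε → α u ≤ (K:ℝ) * |u| := by
    intro u hu
    have hus : u ∈ s := hball (by simpa [Real.dist_eq] using hu)
    have h3 := hK.dist_le_mul u hus 0 h0s
    rw [Real.dist_eq, Real.dist_eq, hα_zero, sub_zero, sub_zero] at h3
    exact (le_abs_self _).trans h3
  -- the last time h (x t) is nonnegative on [0, t₁]
  set S : Set ℝ := Set.Icc 0 t₁ ∩ (fun t => h (x t)) ⁻¹' Set.Ici 0 with hSdef
  have hS0 : (0:ℝ) ∈ S := ⟨⟨le_refl 0, ht₁⟩, hx0⟩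
  have hScomp : IsCompact S := isCompact_Icc.inter_right (isClosed_Ici.preimage hyc)
  set t₀ := sSup S with ht₀def
  have ht₀S : t₀ ∈ S := hScomp.sSup_mem ⟨0, hS0⟩
  obtain ⟨⟨ht₀0, ht₀1⟩, hyt₀⟩ := ht₀S
  have ht₀lt : t₀ < t₁ := lt_of_le_of_ne ht₀1 (by
    intro hEq
    rw [hEq] at hyt₀
    exact absurd hy1 (not_lt.mpr hyt₀))
  have hneg' : ∀ t, t₀ < t → t ≤ t₁ → h (x t) < 0 := by
    intro t htl htu
    by_contra hge
    have htS : t ∈ S := ⟨⟨ht₀0.trans htl.le, htu⟩, le_of_not_gt hge⟩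
    exact absurd (le_csSup hScomp.bddAbove htS) (not_le.mpr htl)
  -- h (x t₀) = 0
  have hy0 : h (x t₀) = 0 := by
    refine le_antisymm ?_ hyt₀
    have htend : Filter.Tendsto (fun t => h (x t)) (nhdsWithin t₀ (Set.Ioi t₀))
        (nhds (h (x t₀))) := (hyc.tendsto t₀).mono_left nhdsWithin_le_nhds
    refine le_of_tendsto htend ?_
    filter_upwards [Ioo_mem_nhdsGT_of_mem ⟨le_refl t₀, ht₀lt⟩] with t ht
    exact (hneg' t ht.1 ht.2.le).le
  -- choose a small interval to the right of t₀
  have hxt₀D : x t₀ ∈ D := hCD (by simp [hy0])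
  have hU : {t : ℝ | x t ∈ D ∧ |h (x t)| < ε} ∈ nhds t₀ := by
    have h1 : (fun t => x t) ⁻¹' D ∈ nhds t₀ := (hD_open.preimage hxc).mem_nhds hxt₀D
    have h2 : {t : ℝ | |h (x t)| < ε} ∈ nhds t₀ := by
      have hc : ContinuousAt (fun t => |h (x t)|) t₀ := (hyc.abs.tendsto t₀)
      have : Set.Iio ε ∈ nhds (|h (x t₀)|) := Iio_mem_nhds (by rw [hy0]; simpa using hε)
      exact hc this
    exact Filter.inter_mem h1 h2
  obtain ⟨δ, hδ, hδsub⟩ := Metric.mem_nhds_iff.mp hU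
  set δ' : ℝ := min (δ/2) (t₁ - t₀) with hδ'def
  have hδ'pos : 0 < δ' := lt_min (by linarith) (by linarith)
  have hδ'le : t₀ + δ' ≤ t₁ := by
    have := min_le_right (δ/2) (t₁ - t₀); simp only [← hδ'def] at this; linarith
  have hIball : ∀ t ∈ Set.Icc t₀ (t₀ + δ'), t ∈ Metric.ball t₀ δ := by
    intro t ⟨h1, h2⟩
    rw [Metric.mem_ball, Real.dist_eq, abs_of_nonneg (by linarith)]
    have := min_le_left (δ/2) (t₁ - t₀); simp only [← hδ'def] at this; linarith
  -- key differential inequality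
  have key : ∀ t ∈ Set.Icc t₀ (t₀ + δ'),
      (K:ℝ) * h (x t) ≤ ⟪gradient h (x t), F (x t)⟫ := by
    intro t ht
    obtain ⟨htD, htε⟩ := hδsub (hIball t ht)
    have h1 : -α (h (x t)) ≤ ⟪gradient h (x t), F (x t)⟫ := hcbf (x t) htD
    rcases eq_or_lt_of_le ht.1 with hEq | hlt
    · rw [← hEq, hy0]
      rw [← hEq, hy0, hα_zero] at h1
      simpa using h1
    · have hneg := hneg' t hlt (ht.2.trans hδ'le)
      have h2 : α (h (x t)) ≤ (K:ℝ) * |h (x t)| := hαb _ htε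
      rw [abs_of_neg hneg] at h2
      linarith
  -- monotone auxiliary function
  set c : ℝ := (K:ℝ) with hcdef
  have hz' : ∀ t, HasDerivAt (fun s => h (x s) * Real.exp (-c * s))
      ((⟪gradient h (x t), F (x t)⟫ - c * h (x t)) * Real.exp (-c * t)) t := by
    intro t
    have h1 := (hy' t).mul (((hasDerivAt_id t).const_mul (-c)).exp)
    have e : (⟪gradient h (x t), F (x t)⟫ - c * h (x t)) * Real.exp (-c * t) =
        ⟪gradient h (x t), F (x t)⟫ * Real.exp (-c * id t) + h (x t) * (Real.exp (-c * id t) * (-c * 1)) := by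
      simp only [id_eq]
      ring
    rw [e]
    exact h1
  have hmono : MonotoneOn (fun s => h (x s) * Real.exp (-c * s)) (Set.Icc t₀ (t₀ + δ')) := by
    apply monotoneOn_of_deriv_nonneg (convex_Icc _ _)
    · exact (hyc.mul (Real.continuous_exp.comp (continuous_const.mul continuous_id))).continuousOn
    · intro t ht
      exact (hz' t).differentiableAt.differentiableWithinAt
    · intro t ht
      rw [(hz' t).deriv]
      have ht2 : t ∈ Set.Ioo t₀ (t₀ + δ') := by rwa [interior_Icc] at ht
      have ht' : t ∈ Set.Icc t₀ (t₀ + δ') := Set.Ioo_subset_Icc_self ht2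
      have := key t ht'
      have hK0 : (0:ℝ) ≤ c := K.coe_nonneg
      exact mul_nonneg (by linarith) (Real.exp_pos _).le
  have hmem1 : t₀ ∈ Set.Icc t₀ (t₀ + δ') := ⟨le_refl _, by linarith⟩
  have hmem2 : t₀ + δ' ∈ Set.Icc t₀ (t₀ + δ') := ⟨by linarith, le_refl _⟩
  have h5 := hmono hmem1 hmem2 (by linarith)
  simp only [hy0, zero_mul] at h5
  have h6 : h (x (t₀ + δ')) < 0 := hneg' _ (by linarith) hδ'le
  nlinarith [Real.exp_pos (-c * (t₀ + δ'))]
end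

section
/- Let h:ℝⁿ→ℝ be smooth with relative degree r ≥ 2 along a flow, define m⁰ = h and mʲ = d/dt(mʲ⁻¹) + αʲ(mʲ⁻¹) for class K functions α¹,…,αʳ (evaluated along a trajectory x(t) of a locally Lipschitz closed-loop system). If mʳ(x(t)) ≥ 0 for all t ≥ 0 and mʲ(x(0)) > 0 for all j ∈ {0,…,r-1}, then mʲ(x(t)) > 0 for all j ∈ {0,…,r-1} and all t ≥ 0; in particular h(x(t)) > 0 for all t ≥ 0. -/
/-- Comparison-type lemma: if `f' = g - α ∘ f` with `g ≥ 0` on `[0,∞)`,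
`α` is `C¹` with `α 0 = 0`, and `f 0 > 0`, then `f > 0` on `[0,∞)`. -/
lemma key_pos (f g : ℝ → ℝ) (α : ℝ → ℝ) (hα : ContDiff ℝ 1 α) (hα0 : α 0 = 0)
    (hf : ∀ t, HasDerivAt f (g t - α (f t)) t)
    (hg : ∀ t, 0 ≤ t → 0 ≤ g t) (h0 : 0 < f 0) :
    ∀ t, 0 ≤ t → 0 < f t := by
  obtain ⟨K, U, hU, hKlip⟩ := (hα.contDiffAt (x := 0)).exists_lipschitzOnWith
  obtain ⟨ε, hε, hball⟩ := Metric.mem_nhds_iff.mp hU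
  have hIccU : Set.Icc (-(ε/2)) (ε/2) ⊆ U := by
    intro s hs
    apply hball
    simp only [Metric.mem_ball, Real.dist_eq, sub_zero]
    rcases hs with ⟨h1, h2⟩
    have : |s| ≤ ε / 2 := abs_le.mpr ⟨h1, h2⟩
    linarith
  have hαle : ∀ s : ℝ, 0 ≤ s → s ≤ ε / 2 → α s ≤ K * s := by
    intro s hs1 hs2
    have h1 : s ∈ Set.Icc (-(ε/2)) (ε/2) := ⟨by linarith, hs2⟩
    have h2 : (0:ℝ) ∈ Set.Icc (-(ε/2)) (ε/2) := ⟨by linarith, by linarith⟩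
    have := hKlip.dist_le_mul s (hIccU h1) 0 (hIccU h2)
    rw [hα0, Real.dist_eq, Real.dist_eq, sub_zero, sub_zero] at this
    calc α s ≤ |α s| := le_abs_self _
      _ ≤ K * |s| := this
      _ = K * s := by rw [abs_of_nonneg hs1]
  have fcont : Continuous f := by
    rw [continuous_iff_continuousAt]; exact fun t => (hf t).continuousAt
  by_contra hcon
  push_neg at hcon
  obtain ⟨t₀, ht₀, hft₀⟩ := hcon
  set S : Set ℝ := Set.Ici 0 ∩ f ⁻¹' Set.Iic 0 with hSdef
  have hSclosed : IsClosed S := isClosed_Ici.inter (isClosed_Iic.preimage fcont)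
  have hSne : S.Nonempty := ⟨t₀, ht₀, hft₀⟩
  have hSbdd : BddBelow S := ⟨0, fun t ht => ht.1⟩
  set T := sInf S with hTdef
  have hTS : T ∈ S := hSclosed.csInf_mem hSne hSbdd
  have hT0 : 0 ≤ T := hTS.1
  have hfT : f T ≤ 0 := hTS.2
  have hTpos : 0 < T := by
    rcases lt_or_eq_of_le hT0 with h | h
    · exact h
    · exfalso; rw [← h] at hfT; linarith
  have hpos : ∀ t, 0 ≤ t → t < T → 0 < f t := by
    intro t ht1 ht2
    by_contra hc
    push_neg at hc
    have : T ≤ t := csInf_le hSbdd ⟨ht1, hc⟩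
    linarith
  -- f T = 0
  have hfT0 : f T = 0 := by
    refine le_antisymm hfT ?_
    have hne : (nhdsWithin T (Set.Ico 0 T)).NeBot := by
      rw [← mem_closure_iff_nhdsWithin_neBot, closure_Ico (ne_of_lt hTpos)]
      exact ⟨hT0, le_rfl⟩
    refine ge_of_tendsto (x := nhdsWithin T (Set.Ico 0 T))
      (fcont.continuousAt.tendsto.mono_left nhdsWithin_le_nhds) ?_
    filter_upwards [self_mem_nhdsWithin] with t ht
    exact (hpos t ht.1 ht.2).le
  -- continuity: pick δ with |f t| < ε/2 near T
  have hcontT : ContinuousAt f T := fcont.continuousAt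
  obtain ⟨δ, hδ, hδ'⟩ := Metric.continuousAt_iff.mp hcontT (ε/2) (by linarith)
  set t₁ := max 0 (T - δ/2) with ht₁def
  have ht₁0 : 0 ≤ t₁ := le_max_left _ _
  have ht₁T : t₁ < T := by
    rw [ht₁def]
    apply max_lt hTpos
    linarith
  have hsmall : ∀ t, t₁ ≤ t → t ≤ T → f t ≤ ε / 2 := by
    intro t h1 h2
    have : dist t T < δ := by
      rw [Real.dist_eq, abs_lt]
      have : T - δ/2 ≤ t₁ := le_max_right _ _
      constructor <;> [linarith; linarith]
    have := hδ' this
    rw [Real.dist_eq, hfT0, sub_zero] at this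
    calc f t ≤ |f t| := le_abs_self _
      _ ≤ ε / 2 := this.le
  have hfnonneg : ∀ t, t₁ ≤ t → t ≤ T → 0 ≤ f t := by
    intro t h1 h2
    rcases lt_or_eq_of_le h2 with h | h
    · exact (hpos t (le_trans ht₁0 h1) h).le
    · rw [h, hfT0]
  -- φ t = exp (K t) * f t is monotone on [t₁, T]
  set φ : ℝ → ℝ := fun t => Real.exp (K * t) * f t with hφdef
  have hφ' : ∀ t, HasDerivAt φ (Real.exp (K * t) * (K * f t + (g t - α (f t)))) t := by
    intro t
    have h1 : HasDerivAt (fun s : ℝ => Real.exp (K * s)) (K * Real.exp (K * t)) t := by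
      have := ((hasDerivAt_id t).const_mul (K:ℝ)).exp
      simpa [mul_comm] using this
    have : HasDerivAt (fun s => Real.exp (K * s) * f s)
        (K * Real.exp (K * t) * f t + Real.exp (K * t) * (g t - α (f t))) t := h1.mul (hf t)
    convert this using 1
    ring
  have hmono : MonotoneOn φ (Set.Icc t₁ T) := by
    apply monotoneOn_of_deriv_nonneg (convex_Icc _ _)
    · exact Continuous.continuousOn (by continuity)
    · intro t _; exact (hφ' t).differentiableAt.differentiableWithinAt
    · intro t ht
      rw [interior_Icc] at ht
      rw [(hφ' t).deriv]
      apply mul_nonneg (Real.exp_nonneg _)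
      have h1 : 0 ≤ f t := hfnonneg t ht.1.le ht.2.le
      have h2 : f t ≤ ε / 2 := hsmall t ht.1.le ht.2.le
      have h3 : α (f t) ≤ K * f t := hαle (f t) h1 h2
      have h4 : 0 ≤ g t := hg t (le_trans ht₁0 ht.1.le)
      linarith
  have h1 : φ t₁ ≤ φ T := hmono ⟨le_refl _, ht₁T.le⟩ ⟨ht₁T.le, le_refl _⟩ ht₁T.le
  have h2 : φ T = 0 := by rw [hφdef]; simp [hfT0]
  have h3 : 0 < φ t₁ := mul_pos (Real.exp_pos _) (hpos t₁ ht₁0 ht₁T)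
  linarith

/-- High-order CBF chain along a trajectory: with `m 0 = h ∘ x` and
`m (j+1) = (d/dt)(m j) + α (j+1) (m j)` for class-K functions `α j`,
if `m r ≥ 0` on `[0,∞)` and `m j 0 > 0` for `j < r`, then `m j t > 0`
for all `j < r` and `t ≥ 0`; in particular `h (x t) = m 0 t > 0`. -/
theorem stmt4 {n : ℕ} (r : ℕ) (hr : 2 ≤ r)
    (h : (Fin n → ℝ) → ℝ) (hh : ContDiff ℝ (⊤ : ℕ∞) h)
    (F : (Fin n → ℝ) → (Fin n → ℝ)) (hF : LocallyLipschitz F)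
    (x : ℝ → (Fin n → ℝ)) (hx : ∀ t : ℝ, HasDerivAt x (F (x t)) t)
    (α : ℕ → ℝ → ℝ)
    (hα : ∀ j, 1 ≤ j → j ≤ r →
      ContDiff ℝ 1 (α j) ∧ StrictMonoOn (α j) (Set.Ici 0) ∧ α j 0 = 0)
    (m : ℕ → ℝ → ℝ)
    (hm0 : ∀ t : ℝ, m 0 t = h (x t))
    (hmrec : ∀ j < r, ∀ t : ℝ,
      HasDerivAt (m j) (m (j + 1) t - α (j + 1) (m j t)) t)
    (hfinal : ∀ t : ℝ, 0 ≤ t → 0 ≤ m r t)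
    (hinit : ∀ j < r, 0 < m j 0) :
    (∀ j < r, ∀ t : ℝ, 0 ≤ t → 0 < m j t) ∧ (∀ t : ℝ, 0 ≤ t → 0 < h (x t)) := by
  have main : ∀ d, d ≤ r → ∀ t : ℝ, 0 ≤ t →
      (0 ≤ m (r - d) t ∧ (1 ≤ d → 0 < m (r - d) t)) := by
    intro d
    induction d with
    | zero =>
      intro _ t ht
      exact ⟨hfinal t ht, fun hle => absurd hle (by norm_num)⟩
    | succ d ih =>
      intro hd t ht
      have hd' : d ≤ r := le_trans (Nat.le_succ d) hd
      have hjlt : r - (d + 1) < r := by omega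
      have hsucc : r - (d + 1) + 1 = r - d := by omega
      have hαj := hα (r - (d + 1) + 1) (by omega) (by omega)
      have hpos : ∀ s : ℝ, 0 ≤ s → 0 < m (r - (d + 1)) s := by
        apply key_pos (m (r - (d + 1))) (m (r - (d + 1) + 1)) (α (r - (d + 1) + 1))
          hαj.1 hαj.2.2
        · intro s
          exact hmrec (r - (d + 1)) hjlt s
        · intro s hs; rw [hsucc]; exact (ih hd' s hs).1
        · exact hinit _ hjlt
      exact ⟨(hpos t ht).le, fun _ => hpos t ht⟩
  have key : ∀ j < r, ∀ t : ℝ, 0 ≤ t → 0 < m j t := by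
    intro j hj t ht
    have hd : r - (r - j) = j := by omega
    have := (main (r - j) (by omega) t ht).2 (by omega)
    rwa [hd] at this
  refine ⟨key, fun t ht => ?_⟩
  rw [← hm0 t]
  exact key 0 (by omega) t ht
end

section
/- For the tractor kinematic model with state (x₁,y₁,v,a,θ,δ₁) and dynamics ẋ₁ = v cos θ, ẏ₁ = v sin θ, v̇ = a, ȧ = J, θ̇ = (v/l₁) tan δ₁, δ̇₁ = ω₁, the third time derivative of h = d_x² + d_y² - d² is affine in the inputs (J, ω₁): h⁽³⁾ = 6va - (6va/l₁) tan δ₁ (d_x sin θ - d_y cos θ) - 2(v³/l₁²) tan² δ₁ (d_x cos θ + d_y sin θ) + 2(d_x cos θ + d_y sin θ)·J - 2(v²/l₁) sec² δ₁ (d_x sin θ - d_y cos θ)·ω₁. -/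
open Real

/-- Third time derivative of the tractor position CBF is affine in the inputs
`(J, ω₁)`: along `ẋ₁ = v cos θ`, `ẏ₁ = v sin θ`, `v̇ = a`, `ȧ = J`,
`θ̇ = (v/l₁) tan δ₁`, `δ̇₁ = ω₁`, the derivative of
`ḧ = 2v² + 2a(d_x cos θ + d_y sin θ) - 2(v²/l₁) tan δ₁ (d_x sin θ - d_y cos θ)`
is the stated expression with input coefficients
`2(d_x cos θ + d_y sin θ)` for `J` and `-2(v²/l₁) sec² δ₁ (d_x sin θ - d_y cos θ)`
for `ω₁`. -/
theorem stmt12 (x₁ y₁ v a θ δ₁ J ω₁ : ℝ → ℝ) (xo yo d l₁ : ℝ)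
    (hd : 0 < d) (hl₁ : 0 < l₁) (t : ℝ)
    (hx : ∀ s, HasDerivAt x₁ (v s * cos (θ s)) s)
    (hy : ∀ s, HasDerivAt y₁ (v s * sin (θ s)) s)
    (hv : ∀ s, HasDerivAt v (a s) s)
    (ha : ∀ s, HasDerivAt a (J s) s)
    (hθ : ∀ s, HasDerivAt θ (v s / l₁ * tan (δ₁ s)) s)
    (hδ : ∀ s, HasDerivAt δ₁ (ω₁ s) s)
    (hcos : cos (δ₁ t) ≠ 0) :
    HasDerivAt
      (fun s => 2 * (v s) ^ 2
        + 2 * a s * ((x₁ s - xo) * cos (θ s) + (y₁ s - yo) * sin (θ s))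
        - 2 * (v s) ^ 2 / l₁ * tan (δ₁ s)
            * ((x₁ s - xo) * sin (θ s) - (y₁ s - yo) * cos (θ s)))
      (6 * v t * a t
        - 6 * v t * a t / l₁ * tan (δ₁ t)
            * ((x₁ t - xo) * sin (θ t) - (y₁ t - yo) * cos (θ t))
        - 2 * (v t) ^ 3 / l₁ ^ 2 * tan (δ₁ t) ^ 2
            * ((x₁ t - xo) * cos (θ t) + (y₁ t - yo) * sin (θ t))
        + 2 * ((x₁ t - xo) * cos (θ t) + (y₁ t - yo) * sin (θ t)) * J t
        - 2 * (v t) ^ 2 / l₁ * (1 / cos (δ₁ t) ^ 2)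
            * ((x₁ t - xo) * sin (θ t) - (y₁ t - yo) * cos (θ t)) * ω₁ t) t := by
  have hθc : HasDerivAt (fun s => cos (θ s))
      (-sin (θ t) * (v t / l₁ * tan (δ₁ t))) t :=
    (Real.hasDerivAt_cos (θ t)).comp t (hθ t)
  have hθs : HasDerivAt (fun s => sin (θ s))
      (cos (θ t) * (v t / l₁ * tan (δ₁ t))) t :=
    (Real.hasDerivAt_sin (θ t)).comp t (hθ t)
  have htan : HasDerivAt (fun s => tan (δ₁ s))
      (1 / cos (δ₁ t) ^ 2 * ω₁ t) t :=
    (Real.hasDerivAt_tan hcos).comp t (hδ t)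
  have hP : HasDerivAt
      (fun s => (x₁ s - xo) * cos (θ s) + (y₁ s - yo) * sin (θ s))
      (v t - (v t / l₁ * tan (δ₁ t)) *
        ((x₁ t - xo) * sin (θ t) - (y₁ t - yo) * cos (θ t))) t := by
    have := (((hx t).sub_const xo).mul hθc).add (((hy t).sub_const yo).mul hθs)
    refine this.congr_deriv ?_
    have h1 := sin_sq_add_cos_sq (θ t)
    linear_combination (v t) * h1
  have hQ : HasDerivAt
      (fun s => (x₁ s - xo) * sin (θ s) - (y₁ s - yo) * cos (θ s))
      ((v t / l₁ * tan (δ₁ t)) *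
        ((x₁ t - xo) * cos (θ t) + (y₁ t - yo) * sin (θ t))) t := by
    have := (((hx t).sub_const xo).mul hθs).sub (((hy t).sub_const yo).mul hθc)
    refine this.congr_deriv ?_
    ring
  have main := ((((hv t).pow 2).const_mul 2).add (((ha t).const_mul 2).mul hP)).sub
    (((((hv t).pow 2).const_mul 2).div_const l₁).mul htan |>.mul hQ)
  refine main.congr_deriv ?_
  simp only [Pi.mul_apply, Pi.pow_apply]
  rw [Real.tan_eq_sin_div_cos]
  field_simp
  ring
end
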